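/- Let F ∈ B_c have bounded total variation VF on ℝ, and let t > 0. Then the total variation over ℝ of the function x ↦ u(x,t) = ∫_ℝ F(x−ξ) Θ_t'(ξ) dξ is at most VF / √(πt). -/

import Mathlib

open MeasureTheory Filter Topology

/-- The Gauss–Weierstrass heat kernel `Θ_t(x) = (4πt)^(−1/2) exp(−x²/(4t))` for `t > 0`. -/
noncomputable def heatK (t x : ℝ) : ℝ :=
  (Real.sqrt (4 * Real.pi * t))⁻¹ * Real.exp (-x ^ 2 / (4 * t))

/-- Spatial derivative of the heat kernel: `Θ_t'(ξ) = −ξ Θ_t(ξ)/(2t)`. -/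
noncomputable def heatK' (t x : ℝ) : ℝ := -x * heatK t x / (2 * t)

/-- `F ∈ B_c`: continuous, vanishing at `−∞`, with a finite limit at `+∞`. -/
def memBc (F : ℝ → ℝ) : Prop :=
  Continuous F ∧ Tendsto F atBot (nhds (0 : ℝ)) ∧ ∃ L : ℝ, Tendsto F atTop (nhds L)

/-- Heat convolution `u(x,t) = ∫ F(x−ξ) Θ_t'(ξ) dξ` of the distribution `f = F'`. -/
noncomputable def heatConv (F : ℝ → ℝ) (t x : ℝ) : ℝ := ∫ ξ : ℝ, F (x - ξ) * heatK' t ξ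

/-! The variation of `x ↦ ∫ F(x−ξ) Θ_t'(ξ) dξ` over a partition is bounded, pointwise in `ξ`,
by the variation of `F` over the translated partition, weighted by `|Θ_t'(ξ)|`. Integrating
gives `VF · ‖Θ_t'‖₁`, and `‖Θ_t'‖₁ = 1/√(πt)` is an elementary Gaussian moment. -/

section Gaussian

open Real Set

theorem integral_Ioi_mul_exp_neg_mul_sq {b : ℝ} (hb : 0 < b) :
    ∫ x in Ioi 0, x * exp (-b * x ^ 2) = (2 * b)⁻¹ := by
  have hb' : 0 < (b : ℂ).re := by simpa using hb
  have h := integral_mul_cexp_neg_mul_sq hb'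
  have hcast : ∀ x : ℝ, (x : ℂ) * Complex.exp (-(b : ℂ) * (x : ℂ) ^ 2)
      = ((x * exp (-b * x ^ 2) : ℝ) : ℂ) := fun x => by push_cast; rfl
  simp only [hcast] at h
  exact_mod_cast h

theorem integral_abs_mul_exp_neg_mul_sq {b : ℝ} (hb : 0 < b) :
    ∫ x, |x| * exp (-b * x ^ 2) = b⁻¹ := by
  have h := integral_comp_abs (f := fun x => x * exp (-b * x ^ 2))
  simp only [sq_abs] at h
  rw [h, integral_Ioi_mul_exp_neg_mul_sq hb]
  field_simp

end Gaussian

section HeatKernel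

open Real

theorem heatK'_eq (t x : ℝ) :
    heatK' t x = -(2 * t * √(4 * π * t))⁻¹ * (x * exp (-(4 * t)⁻¹ * x ^ 2)) := by
  rw [heatK', heatK, show -x ^ 2 / (4 * t) = -(4 * t)⁻¹ * x ^ 2 by ring, mul_inv]
  ring

theorem integrable_heatK' {t : ℝ} (ht : 0 < t) : Integrable (heatK' t) := by
  simpa only [← heatK'_eq] using
    (integrable_mul_exp_neg_mul_sq (by positivity : (0 : ℝ) < (4 * t)⁻¹)).const_mul
      (-(2 * t * √(4 * π * t))⁻¹)

theorem integral_abs_heatK' {t : ℝ} (ht : 0 < t) : ∫ x, |heatK' t x| = (√(π * t))⁻¹ := by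
  have hc : 0 < 2 * t * √(4 * π * t) := by positivity
  have habs : ∀ x, |heatK' t x| = (2 * t * √(4 * π * t))⁻¹ * (|x| * exp (-(4 * t)⁻¹ * x ^ 2)) :=
    fun x => by
      rw [heatK'_eq, abs_mul, abs_neg, abs_of_pos (inv_pos.mpr hc), abs_mul,
        abs_of_pos (exp_pos _)]
  have hsqrt : √(4 * π * t) = 2 * √(π * t) := by
    rw [mul_assoc, sqrt_mul (by norm_num), show (4 : ℝ) = 2 ^ 2 by norm_num,
      sqrt_sq (by norm_num)]
  have hpos : 0 < √(π * t) := by positivity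
  simp only [habs, integral_const_mul, integral_abs_mul_exp_neg_mul_sq (inv_pos.mpr
    (by positivity : (0 : ℝ) < 4 * t)), hsqrt]
  field_simp
  ring

theorem lintegral_enorm_heatK' {t : ℝ} (ht : 0 < t) :
    ∫⁻ x, ‖heatK' t x‖ₑ = ENNReal.ofReal (√(π * t))⁻¹ := by
  rw [← ofReal_integral_norm_eq_lintegral_enorm (integrable_heatK' ht)]
  simp only [Real.norm_eq_abs, integral_abs_heatK' ht]

end HeatKernel

section Variation

open Set

theorem LocallyBoundedVariationOn.measurable {f : ℝ → ℝ}
    (hf : LocallyBoundedVariationOn f univ) : Measurable f := by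
  obtain ⟨p, q, hp, hq, rfl⟩ := hf.exists_monotoneOn_sub_monotoneOn
  exact (monotoneOn_univ.mp hp).measurable.sub (monotoneOn_univ.mp hq).measurable

theorem BoundedVariationOn.norm_le {f : ℝ → ℝ} (hf : BoundedVariationOn f univ) (x : ℝ) :
    ‖f x‖ ≤ ‖f 0‖ + (eVariationOn f univ).toReal := by
  have := hf.dist_le (mem_univ x) (mem_univ 0)
  rw [dist_eq_norm] at this
  linarith [norm_sub_norm_le (f x) (f 0)]

theorem integrable_comp_sub_mul_of_boundedVariationOn {f g : ℝ → ℝ}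
    (hf : BoundedVariationOn f univ) (hg : Integrable g) (x : ℝ) :
    Integrable fun ξ => f (x - ξ) * g ξ :=
  hg.bdd_mul ((hf.locallyBoundedVariationOn.measurable.comp (measurable_const.sub measurable_id))
    |>.aestronglyMeasurable) (ae_of_all _ fun ξ => hf.norm_le (x - ξ))

theorem edist_integral_comp_sub_mul_le {f g : ℝ → ℝ} (hf : BoundedVariationOn f univ)
    (hg : Integrable g) (a b : ℝ) :
    edist (∫ ξ, f (a - ξ) * g ξ) (∫ ξ, f (b - ξ) * g ξ)
      ≤ ∫⁻ ξ, edist (f (a - ξ)) (f (b - ξ)) * ‖g ξ‖ₑ := by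
  rw [edist_eq_enorm_sub, ← integral_sub (integrable_comp_sub_mul_of_boundedVariationOn hf hg a)
    (integrable_comp_sub_mul_of_boundedVariationOn hf hg b)]
  refine (enorm_integral_le_lintegral_enorm _).trans_eq ?_
  simp only [← sub_mul, enorm_mul, edist_eq_enorm_sub]

theorem eVariationOn_integral_comp_sub_mul_le {f g : ℝ → ℝ} (hf : BoundedVariationOn f univ)
    (hg : Integrable g) :
    eVariationOn (fun x => ∫ ξ, f (x - ξ) * g ξ) univ
      ≤ eVariationOn f univ * ∫⁻ ξ, ‖g ξ‖ₑ := by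
  have hmeas := hf.locallyBoundedVariationOn.measurable
  refine iSup_le fun ⟨n, u, hu, _⟩ => ?_
  calc ∑ i ∈ Finset.range n, edist (∫ ξ, f (u (i + 1) - ξ) * g ξ) (∫ ξ, f (u i - ξ) * g ξ)
      ≤ ∑ i ∈ Finset.range n, ∫⁻ ξ, edist (f (u (i + 1) - ξ)) (f (u i - ξ)) * ‖g ξ‖ₑ :=
        Finset.sum_le_sum fun i _ => edist_integral_comp_sub_mul_le hf hg _ _
    _ = ∫⁻ ξ, ∑ i ∈ Finset.range n, edist (f (u (i + 1) - ξ)) (f (u i - ξ)) * ‖g ξ‖ₑ :=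
        (lintegral_finsetSum' _ fun i _ => by fun_prop).symm
    _ ≤ ∫⁻ ξ, eVariationOn f univ * ‖g ξ‖ₑ := by
        refine lintegral_mono fun ξ => ?_
        rw [← Finset.sum_mul]
        gcongr
        exact eVariationOn.sum_le (fun i j hij => sub_le_sub_right (hu hij) ξ) fun _ => mem_univ _
    _ = eVariationOn f univ * ∫⁻ ξ, ‖g ξ‖ₑ := lintegral_const_mul'' _ hg.aemeasurable.enorm

end Variation

theorem stmt8_general (F : ℝ → ℝ) (hBV : BoundedVariationOn F Set.univ)
    (t : ℝ) (ht : 0 < t) :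
    eVariationOn (fun x => heatConv F t x) Set.univ
      ≤ eVariationOn F Set.univ / ENNReal.ofReal (Real.sqrt (Real.pi * t)) := by
  calc eVariationOn (fun x => heatConv F t x) Set.univ
      ≤ eVariationOn F Set.univ * ∫⁻ ξ, ‖heatK' t ξ‖ₑ :=
        eVariationOn_integral_comp_sub_mul_le hBV (integrable_heatK' ht)
    _ = eVariationOn F Set.univ / ENNReal.ofReal (Real.sqrt (Real.pi * t)) := by
        rw [lintegral_enorm_heatK' ht, ENNReal.ofReal_inv_of_pos (by positivity), div_eq_mul_inv]

/-- If `F ∈ B_c` has bounded total variation `VF` on `ℝ` and `t > 0`, then the total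
variation of `x ↦ u(x,t)` over `ℝ` is at most `VF/√(πt)`. -/
theorem stmt8 (F : ℝ → ℝ) (hF : memBc F) (hBV : BoundedVariationOn F Set.univ)
    (t : ℝ) (ht : 0 < t) :
    eVariationOn (fun x => heatConv F t x) Set.univ
      ≤ eVariationOn F Set.univ / ENNReal.ofReal (Real.sqrt (Real.pi * t)) :=
  stmt8_general F hBV t ht
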